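/- arXiv:1009.0626 — 4 statements merged into one kernel-verified Lean document; each statement's English description precedes it below -/
import Mathlib

section
/- In a uniformly random permutation X₁,...,Xₙ of {1,...,n} with relative ranks Yᵢ, for r ≤ s ≤ n-1 and s+2 ≤ i ≤ n, the probability P(min{Y_{s+1},...,Y_{i-1}} > r) equals (s)_r / (i-1)_r, where (x)_r is the falling factorial. -/
open Finset

/-- The relative rank of the element at position `t` among the first `t+1` observed elements. -/
def relRank (n : ℕ) (σ : Equiv.Perm (Fin n)) (t : Fin n) : ℕ :=
  (Finset.univ.filter (fun k : Fin n => k ≤ t ∧ σ k ≤ σ t)).card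

/-!
Let `P` be the first `i - 1` positions and `S ⊆ P` the first `s`. All relative ranks at the
positions of `P \ S` exceed `r` exactly when the positions in `P` carrying the `r` smallest values
of `σ` on `P` (its `lowPositions`) lie in `S`. Precomposing `σ` with a permutation preserving `P`
moves this `r`-set by that permutation, and such permutations act transitively on the `r`-subsets
of `P`; so all `(i - 1).choose r` of them are equally likely, and the probability is
`s.choose r / (i - 1).choose r = (s)_r / (i - 1)_r`.
-/

theorem Finset.card_filter_card_filter_le_le {β : Type*} [LinearOrder β] (Q : Finset β) {r : ℕ}
    (hr : r ≤ #Q) : #{v ∈ Q | #{w ∈ Q | w ≤ v} ≤ r} = r := by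
  obtain ⟨k, e, rfl⟩ : ∃ (k : ℕ) (e : Fin k ↪o β), Q = univ.map e.toEmbedding :=
    ⟨_, _, (Q.map_orderEmbOfFin_univ rfl).symm⟩
  have hrank (j : Fin k) : #{i : Fin k | i ≤ j} = j + 1 := by
    rw [filter_ge_eq_Iic, Fin.card_Iic]
  rw [card_map, card_univ, Fintype.card_fin] at hr
  simp [filter_map, hrank, Fin.card_filter_val_lt, hr]

theorem Finset.exists_perm_forall_mem_iff {α : Type*} [DecidableEq α] {P A B : Finset α}
    (hA : A ⊆ P) (hB : B ⊆ P) (hAB : #A = #B) :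
    ∃ π : Equiv.Perm α, (∀ x, π x ∈ P ↔ x ∈ P) ∧ ∀ x, π x ∈ B ↔ x ∈ A := by
  have := Set.powersetCard.isPretransitive (α := P) (n := #A)
  obtain ⟨ρ, hρ⟩ := MulAction.exists_smul_eq (Equiv.Perm P)
    (⟨A.subtype (· ∈ P), by simp [card_subtype, filter_true_of_mem hA]⟩ : Set.powersetCard P #A)
    ⟨B.subtype (· ∈ P), by simp [card_subtype, filter_true_of_mem hB, hAB]⟩
  have hρ' := congrArg Subtype.val hρ
  simp only [Set.powersetCard.coe_smul] at hρ'
  refine ⟨Equiv.Perm.ofSubtype ρ, fun x => ?_, fun x => ?_⟩ <;> by_cases hx : x ∈ P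
  · simp [Equiv.Perm.ofSubtype_apply_of_mem ρ hx, hx]
  · simp [Equiv.Perm.ofSubtype_apply_of_not_mem ρ hx, hx]
  · have := Finset.ext_iff.mp hρ' (ρ • ⟨x, hx⟩)
    rw [Finset.smul_mem_smul_finset_iff] at this
    simpa [Equiv.Perm.ofSubtype_apply_of_mem ρ hx] using this.symm
  · rw [Equiv.Perm.ofSubtype_apply_of_not_mem ρ hx]
    exact iff_of_false (fun h => hx (hB h)) (fun h => hx (hA h))

section LowPositions

variable {α β : Type*} [LinearOrder β]

def lowPositions (P : Finset α) (r : ℕ) (σ : α → β) : Finset α :=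
  {t ∈ P | #{k ∈ P | σ k ≤ σ t} ≤ r}

variable {P : Finset α} {r : ℕ} {σ : α → β}

theorem lowPositions_subset : lowPositions P r σ ⊆ P := filter_subset _ _

theorem card_lowPositions (hσ : σ.Injective) (hr : r ≤ #P) : #(lowPositions P r σ) = r := by
  have himage :
      (lowPositions P r σ).image σ = {v ∈ P.image σ | #{w ∈ P.image σ | w ≤ v} ≤ r} := by
    simp [lowPositions, filter_image, card_image_of_injective _ hσ]
  rw [← card_image_of_injective _ hσ, himage,
    card_filter_card_filter_le_le _ (by rwa [card_image_of_injective _ hσ])]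

theorem lt_of_mem_lowPositions {t u : α} (ht : t ∈ lowPositions P r σ) (hu : u ∈ P)
    (hu' : u ∉ lowPositions P r σ) : σ t < σ u := by
  simp only [lowPositions, mem_filter] at ht hu'
  by_contra! hut
  refine hu' ⟨hu, le_trans (card_le_card fun k => ?_) ht.2⟩
  simp only [mem_filter]
  exact fun ⟨hk, hku⟩ => ⟨hk, hku.trans hut⟩

theorem mem_lowPositions_comp {π : Equiv.Perm α} (hπ : ∀ x, π x ∈ P ↔ x ∈ P) (t : α) :
    t ∈ lowPositions P r (σ ∘ π) ↔ π t ∈ lowPositions P r σ := by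
  have (x : β) : #{k ∈ P | σ (π k) ≤ x} = #{k ∈ P | σ k ≤ x} :=
    card_equiv π fun k => by simp [hπ]
  simp [lowPositions, hπ, this]

end LowPositions

section Perm

variable {α : Type*} [Fintype α] [LinearOrder α] {P : Finset α} {r : ℕ}

theorem card_filter_lowPositions_eq_congr {A B : Finset α} (hA : A ∈ powersetCard r P)
    (hB : B ∈ powersetCard r P) :
    #{σ : Equiv.Perm α | lowPositions P r σ = A}
      = #{σ : Equiv.Perm α | lowPositions P r σ = B} := by
  rw [mem_powersetCard] at hA hB
  obtain ⟨π, hπP, hπ⟩ := exists_perm_forall_mem_iff hB.1 hA.1 (hB.2.trans hA.2.symm)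
  refine card_equiv (Equiv.mulRight π) fun σ => ?_
  simp only [mem_filter, mem_univ, true_and, Equiv.coe_mulRight, Equiv.Perm.coe_mul,
    Finset.ext_iff, mem_lowPositions_comp hπP, ← hπ]
  exact π.forall_congr_right.symm

theorem card_filter_lowPositions_subset {S A : Finset α} (hSP : S ⊆ P)
    (hA : A ∈ powersetCard r P) :
    #{σ : Equiv.Perm α | lowPositions P r σ ⊆ S}
      = (#S).choose r * #{σ : Equiv.Perm α | lowPositions P r σ = A} := by
  have hr : r ≤ #P := (mem_powersetCard.1 hA).2 ▸ card_le_card (mem_powersetCard.1 hA).1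
  rw [card_eq_sum_card_fiberwise (t := powersetCard r S)
    (f := fun σ : Equiv.Perm α => lowPositions P r σ)
    fun σ hσ => mem_powersetCard.2 ⟨(mem_filter.1 hσ).2, card_lowPositions σ.injective hr⟩]
  have hfiber (B : Finset α) (hB : B ∈ powersetCard r S) :
      #{σ : Equiv.Perm α | lowPositions P r σ ⊆ S ∧ lowPositions P r σ = B}
        = #{σ : Equiv.Perm α | lowPositions P r σ = A} := by
    rw [← card_filter_lowPositions_eq_congr (powersetCard_mono hSP hB) hA]
    congr 1
    exact filter_congr fun σ _ => and_iff_right_of_imp fun h => h ▸ (mem_powersetCard.1 hB).1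
  simp_rw [filter_filter]
  rw [sum_congr rfl hfiber, sum_const, card_powersetCard, smul_eq_mul]

theorem card_filter_lowPositions_subset_mul_choose {S : Finset α} (hSP : S ⊆ P) (hr : r ≤ #P) :
    #{σ : Equiv.Perm α | lowPositions P r σ ⊆ S} * (#P).choose r
      = (#S).choose r * (Fintype.card α).factorial := by
  obtain ⟨A, hA⟩ : (powersetCard r P).Nonempty := powersetCard_nonempty.2 hr
  have htotal : #{σ : Equiv.Perm α | lowPositions P r σ ⊆ P} = (Fintype.card α).factorial := by
    rw [filter_true_of_mem fun σ _ => lowPositions_subset, card_univ, Fintype.card_perm]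
  rw [card_filter_lowPositions_subset hSP hA, ← htotal,
    card_filter_lowPositions_subset subset_rfl hA]
  ring

end Perm

theorem forall_lt_relRank_iff {n r s m : ℕ} (σ : Equiv.Perm (Fin n)) (hrs : r ≤ s) (hsm : s ≤ m)
    (hmn : m ≤ n) :
    (∀ t : Fin n, s ≤ t → t < m → r < relRank n σ t) ↔
      lowPositions {t : Fin n | (t : ℕ) < m} r σ ⊆ ({t | (t : ℕ) < s} : Finset (Fin n)) := by
  set P : Finset (Fin n) := {t | (t : ℕ) < m}
  constructor
  · intro h t ht
    have htm : (t : ℕ) < m := by simpa [P] using lowPositions_subset ht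
    rw [mem_filter_univ]
    by_contra! hst
    refine (h t hst htm).not_ge (le_trans (card_le_card fun k => ?_) (mem_filter.1 ht).2)
    simp only [mem_filter, mem_univ, true_and, P]
    exact fun ⟨hkt, hk⟩ => ⟨Nat.lt_of_le_of_lt hkt htm, hk⟩
  · intro hsub t hst htm
    have htP : t ∈ P := by simpa [P]
    have ht : t ∉ lowPositions P r σ := fun h => by simpa [hst.not_gt] using hsub h
    have hcard : #(insert t (lowPositions P r σ)) = r + 1 := by
      rw [card_insert_of_notMem ht, card_lowPositions σ.injective]
      simp only [P, Fin.card_filter_val_lt]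
      omega
    rw [relRank, Nat.lt_iff_add_one_le, ← hcard]
    refine card_le_card fun k hk => ?_
    rcases mem_insert.1 hk with rfl | hk
    · simp
    · have hks : (k : ℕ) < s := by simpa using hsub hk
      simp only [mem_filter_univ, Fin.le_def]
      exact ⟨by omega, (lt_of_mem_lowPositions hk htP ht).le⟩

-- The 1-based position `p ∈ {s+1, ..., i-1}` is the index `t : Fin n` with `s ≤ t.val ≤ i - 2`.
theorem prob_min_relRank_gt_general (n s r i : ℕ) (hrs : r ≤ s)
    (hsi : s + 2 ≤ i) (hin : i ≤ n) :
    ((Finset.univ.filter (fun σ : Equiv.Perm (Fin n) =>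
        ∀ t : Fin n, s ≤ (t : ℕ) → (t : ℕ) ≤ i - 2 → r < relRank n σ t)).card : ℝ)
      / (Nat.factorial n : ℝ)
    = (Nat.descFactorial s r : ℝ) / (Nat.descFactorial (i - 1) r : ℝ) := by
  set P : Finset (Fin n) := {t | (t : ℕ) < i - 1}
  set S : Finset (Fin n) := {t | (t : ℕ) < s}
  have hP : #P = i - 1 := by simp only [P, Fin.card_filter_val_lt]; omega
  have hS : #S = s := by simp only [S, Fin.card_filter_val_lt]; omega
  have hevent : ∀ σ : Equiv.Perm (Fin n), (∀ t : Fin n, s ≤ (t : ℕ) → (t : ℕ) ≤ i - 2 →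
      r < relRank n σ t) ↔ lowPositions P r σ ⊆ S := fun σ => by
    rw [← forall_lt_relRank_iff σ hrs (by omega) (by omega)]
    exact forall_congr' fun t => by grind
  have hcount := card_filter_lowPositions_subset_mul_choose (r := r)
    (fun t ht => by simp only [S, P, mem_filter_univ] at ht ⊢; omega : S ⊆ P) (by omega)
  rw [hP, hS, Fintype.card_fin] at hcount
  rw [filter_congr fun σ _ => hevent σ, Nat.descFactorial_eq_factorial_mul_choose,
    Nat.descFactorial_eq_factorial_mul_choose, div_eq_div_iff (by positivity)
    (by have := Nat.choose_pos (show r ≤ i - 1 by omega); positivity)]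
  exact_mod_cast by rw [mul_left_comm, hcount]; ring

/-- In a uniformly random permutation of `{1,...,n}` with relative ranks `Yᵢ`, for
`r ≤ s ≤ n-1` and `s+2 ≤ i ≤ n`, the probability
`P(min{Y_{s+1},...,Y_{i-1}} > r)` equals `(s)_r / (i-1)_r`.
(The 1-based position `p ∈ {s+1,...,i-1}` corresponds to the index `t : Fin n`
with `s ≤ t.val ≤ i-2`.) -/
theorem prob_min_relRank_gt (n s r i : ℕ) (hrs : r ≤ s) (hsn : s ≤ n - 1)
    (hsi : s + 2 ≤ i) (hin : i ≤ n) :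
    ((Finset.univ.filter (fun σ : Equiv.Perm (Fin n) =>
        ∀ t : Fin n, s ≤ (t : ℕ) → (t : ℕ) ≤ i - 2 → r < relRank n σ t)).card : ℝ)
      / (Nat.factorial n : ℝ)
    = (Nat.descFactorial s r : ℝ) / (Nat.descFactorial (i - 1) r : ℝ) :=
  prob_min_relRank_gt_general n s r i hrs hsi hin
end

section
/- In a uniformly random permutation of {1,...,n} with relative ranks Yᵢ, for rank levels 1 ≤ r₁ < r₂, position thresholds r₁ ≤ s₁ < s₂ ≤ n-1 with r₂ ≤ s₂, and s₂+2 ≤ i ≤ n, the probability P(min{Y_{s₁+1},...,Y_{s₂}} > r₁ and min{Y_{s₂+1},...,Y_{i-1}} > r₂) equals (s₁)_{r₁}·(s₂-r₁)_{r₂-r₁} / (i-1)_{r₂}. -/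
/-!
Reading a permutation off from its relative ranks is possible position by position: whether
`σ k < σ l` for `k < l` is decided by `Y_l` and the order of the earlier values. So
`σ ↦ (Y_t - 1)_t` is injective into `∏ t, Fin (t + 1)`, a set of size `n!`, hence bijective:
the relative ranks are independent with `Y_t` uniform on `{1, …, t + 1}`. The event is the
product event `Y_t > a t` for a step function `a` (`r₁` on `[s₁, s₂)`, `r₂` on `[s₂, i - 1)`),
of probability `∏_t (t + 1 - a t)/(t + 1)`, and on each step the product telescopes because
`(t + 1 - r) (t + 1)_r = (t + 1) (t)_r`.
-/

open Finset

section RelRank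

variable {n : ℕ} (σ : Equiv.Perm (Fin n))

lemma one_le_relRank (t : Fin n) : 1 ≤ relRank n σ t :=
  card_pos.mpr ⟨t, by simp⟩

lemma relRank_le (t : Fin n) : relRank n σ t ≤ t + 1 :=
  (card_le_card fun _ hk => mem_Iic.mpr (mem_filter.mp hk).2.1).trans (Fin.card_Iic t).le

lemma relRank_eq_card_lt_add_one (t : Fin n) :
    relRank n σ t = #{j | j < t ∧ σ j < σ t} + 1 := by
  have : ({k | k ≤ t ∧ σ k ≤ σ t} : Finset _) =
      insert t ({j | j < t ∧ σ j < σ t} : Finset _) := by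
    ext k
    simp only [mem_filter, mem_univ, true_and, mem_insert, le_iff_lt_or_eq (a := k),
      le_iff_lt_or_eq (a := σ k), σ.injective.eq_iff]
    grind
  rw [relRank, this, card_insert_of_notMem (by simp)]

lemma lt_iff_card_lt_relRank {k l : Fin n} (hkl : k < l) :
    σ k < σ l ↔ #{j | j < l ∧ σ j ≤ σ k} < relRank n σ l := by
  rw [relRank_eq_card_lt_add_one, Nat.lt_succ_iff]
  constructor
  · intro h
    exact card_le_card fun j hj => by
      simp only [mem_filter, mem_univ, true_and] at hj ⊢
      exact ⟨hj.1, hj.2.trans_lt h⟩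
  · intro h
    by_contra hlk
    have hlk : σ l < σ k := (not_lt.mp hlk).lt_of_ne (σ.injective.ne hkl.ne')
    refine h.not_gt (card_lt_card ((ssubset_iff_of_subset fun j hj => ?_).mpr ⟨k, ?_, ?_⟩))
    · simp only [mem_filter, mem_univ, true_and] at hj ⊢
      exact ⟨hj.1, (hj.2.trans hlk).le⟩
    · simp [hkl]
    · simp [hlk.not_gt]

end RelRank

lemma le_iff_le_comm_of_injective {α β : Type*} [LinearOrder β] {f g : α → β}
    (hf : Function.Injective f) (hg : Function.Injective g) {j l : α}
    (h : f j ≤ f l ↔ g j ≤ g l) : f l ≤ f j ↔ g l ≤ g j := by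
  rcases eq_or_ne j l with rfl | hjl
  · simp
  rw [(hf.ne hjl.symm).le_iff_lt, (hg.ne hjl.symm).le_iff_lt, ← not_le, ← not_le, h]

lemma le_iff_le_of_relRank_eq {n : ℕ} {σ τ : Equiv.Perm (Fin n)}
    (h : ∀ t, relRank n σ t = relRank n τ t) (l : Fin n) :
    ∀ j ≤ l, σ j ≤ σ l ↔ τ j ≤ τ l := by
  induction l using WellFoundedLT.induction with
  | _ l ih =>
  intro j hjl
  rcases hjl.eq_or_lt with rfl | hjl
  · simp
  have agree : ∀ i < l, σ i ≤ σ j ↔ τ i ≤ τ j := fun i hi => by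
    rcases le_total i j with hij | hji
    · exact ih j hjl i hij
    · exact le_iff_le_comm_of_injective σ.injective τ.injective (ih i hi j hji)
  rw [(σ.injective.ne hjl.ne).le_iff_lt, (τ.injective.ne hjl.ne).le_iff_lt,
    lt_iff_card_lt_relRank σ hjl, lt_iff_card_lt_relRank τ hjl, h l]
  congr! 2
  exact filter_congr fun i _ => and_congr_right fun hi => agree i hi

/-- Permutations inducing the same order on `Fin n` differ by an order automorphism of `Fin n`,
which is the identity. -/
theorem eq_of_relRank_eq {n : ℕ} {σ τ : Equiv.Perm (Fin n)}
    (h : ∀ t, relRank n σ t = relRank n τ t) : σ = τ := by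
  have hle : ∀ j l, σ j ≤ σ l ↔ τ j ≤ τ l := fun j l =>
    (le_total j l).elim (le_iff_le_of_relRank_eq h l j) fun hlj =>
      le_iff_le_comm_of_injective σ.injective τ.injective (le_iff_le_of_relRank_eq h j l hlj)
  let ρ : Fin n ≃o Fin n :=
    ⟨σ.symm.trans τ, fun {a b} => by simpa using (hle (σ.symm a) (σ.symm b)).symm⟩
  refine Equiv.ext fun j => ?_
  simpa [ρ] using congr($(Subsingleton.elim ρ (OrderIso.refl _)) (σ j)).symm

def relRankCode {n : ℕ} (σ : Equiv.Perm (Fin n)) (t : Fin n) : Fin (t + 1) :=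
  ⟨relRank n σ t - 1, by have := relRank_le σ t; omega⟩

lemma relRankCode_injective {n : ℕ} : Function.Injective (relRankCode (n := n)) := by
  intro σ τ h
  refine eq_of_relRank_eq fun t => ?_
  have := Fin.val_eq_of_eq (congr_fun h t)
  have := one_le_relRank σ t
  have := one_le_relRank τ t
  simp only [relRankCode] at *
  omega

lemma relRankCode_bijective {n : ℕ} : Function.Bijective (relRankCode (n := n)) := by
  refine (Fintype.bijective_iff_injective_and_card _).mpr ⟨relRankCode_injective, ?_⟩
  simp [Fintype.card_perm, Fintype.card_pi, Fin.prod_univ_eq_prod_range (· + 1),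
    prod_range_add_one_eq_factorial]

lemma Fin.card_filter_le_val (m k : ℕ) : #{y : Fin m | k ≤ (y : ℕ)} = m - k := by
  have := card_filter_add_card_filter_not (s := univ) fun y : Fin m => k ≤ (y : ℕ)
  simp only [not_le, Fin.card_filter_val_lt, card_univ, Fintype.card_fin] at this
  omega

theorem card_forall_lt_relRank_div_factorial {K : Type*} [Field K] [CharZero K] {n : ℕ}
    (a : ℕ → ℕ) :
    (#{σ : Equiv.Perm (Fin n) | ∀ t : Fin n, a t < relRank n σ t} : K) / n.factorial =
      ∏ t ∈ range n, ((t + 1 - a t : ℕ) : K) / (t + 1) := by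
  have hcard : #{σ : Equiv.Perm (Fin n) | ∀ t : Fin n, a t < relRank n σ t} =
      ∏ t : Fin n, (t + 1 - a t) := by
    rw [card_bijective _ relRankCode_bijective
      (t := Fintype.piFinset fun t : Fin n => {y : Fin (t + 1) | a t ≤ (y : ℕ)}),
      Fintype.card_piFinset]
    · simp only [Fin.card_filter_le_val]
    · intro σ
      simp only [mem_filter, mem_univ, true_and, Fintype.mem_piFinset, relRankCode]
      refine forall_congr' fun t => ?_
      have := one_le_relRank σ t
      omega
  rw [hcard, prod_div_distrib, ← prod_range_add_one_eq_factorial, Fin.prod_univ_eq_prod_range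
    (fun t => t + 1 - a t)]
  push_cast
  rfl

lemma Nat.cast_descFactorial_ne_zero {K : Type*} [AddMonoidWithOne K] [CharZero K] {m r : ℕ}
    (h : r ≤ m) : (m.descFactorial r : K) ≠ 0 :=
  Nat.cast_ne_zero.mpr (Nat.descFactorial_pos.mpr h).ne'

theorem prod_Ico_sub_div_eq_descFactorial_div {K : Type*} [Field K] [CharZero K] {r a b : ℕ}
    (hra : r ≤ a) (hab : a ≤ b) :
    ∏ t ∈ Ico a b, ((t + 1 - r : ℕ) : K) / (t + 1) = a.descFactorial r / b.descFactorial r := by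
  induction b, hab using Nat.le_induction with
  | base => simp [Nat.cast_descFactorial_ne_zero (K := K) hra]
  | succ b hab ih =>
    have step : ((b + 1 - r : ℕ) : K) * (b + 1).descFactorial r =
        (b + 1) * b.descFactorial r := by
      exact_mod_cast Nat.succ_descFactorial b r
    rw [prod_Ico_succ_top hab, ih, div_mul_div_comm, div_eq_div_iff
      (mul_ne_zero (Nat.cast_descFactorial_ne_zero (hra.trans hab)) (Nat.cast_add_one_ne_zero b))
      (Nat.cast_descFactorial_ne_zero (by omega))]
    linear_combination (a.descFactorial r : K) * step

def stepThreshold (r₁ r₂ s₁ s₂ s₃ t : ℕ) : ℕ :=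
  if t ∈ Ico s₁ s₂ then r₁ else if t ∈ Ico s₂ s₃ then r₂ else 0

section StepThreshold

variable {r₁ r₂ s₁ s₂ s₃ : ℕ}

lemma forall_stepThreshold_lt_relRank_iff {n : ℕ} (σ : Equiv.Perm (Fin n)) :
    (∀ t : Fin n, stepThreshold r₁ r₂ s₁ s₂ s₃ t < relRank n σ t) ↔
      (∀ t : Fin n, s₁ ≤ (t : ℕ) → (t : ℕ) < s₂ → r₁ < relRank n σ t) ∧
        (∀ t : Fin n, s₂ ≤ (t : ℕ) → (t : ℕ) < s₃ → r₂ < relRank n σ t) := by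
  have := one_le_relRank σ
  simp only [stepThreshold, mem_Ico]
  refine ⟨fun h => ⟨fun t ht ht' => ?_, fun t ht ht' => ?_⟩, fun ⟨h₁, h₂⟩ t => ?_⟩
  · simpa [ht, ht'] using h t
  · simpa [ht, ht', show ¬ (t : ℕ) < s₂ by omega] using h t
  · split_ifs <;> grind

lemma prod_range_stepThreshold {K : Type*} [Field K] [CharZero K] {n : ℕ}
    (h₁₂ : s₁ ≤ s₂) (h₂₃ : s₂ ≤ s₃) (h₃ : s₃ ≤ n) :
    ∏ t ∈ range n, ((t + 1 - stepThreshold r₁ r₂ s₁ s₂ s₃ t : ℕ) : K) / (t + 1) =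
      (∏ t ∈ Ico s₁ s₂, ((t + 1 - r₁ : ℕ) : K) / (t + 1)) *
        ∏ t ∈ Ico s₂ s₃, ((t + 1 - r₂ : ℕ) : K) / (t + 1) := by
  have outside : ∀ t ∉ Ico s₁ s₃, stepThreshold r₁ r₂ s₁ s₂ s₃ t = 0 := fun t ht => by
    simp only [mem_Ico] at ht
    simp [stepThreshold, show ¬ (s₁ ≤ t ∧ t < s₂) by omega,
      show ¬ (s₂ ≤ t ∧ t < s₃) by omega]
  rw [← prod_subset (s₁ := Ico s₁ s₃) (fun t ht => by simp at ht ⊢; omega)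
      fun t _ ht => by simp [outside t ht, Nat.cast_add_one_ne_zero],
    ← prod_Ico_consecutive _ h₁₂ h₂₃]
  refine congr_arg₂ _ (prod_congr rfl fun t ht => ?_) (prod_congr rfl fun t ht => ?_)
  · rw [stepThreshold, if_pos ht]
  · simp only [mem_Ico] at ht
    simp [stepThreshold, ht, show ¬ t < s₂ by omega]

end StepThreshold

theorem prob_double_min_relRank_gt_general (n r₁ r₂ s₁ s₂ i : ℕ)
    (hr12 : r₁ < r₂) (hr1s1 : r₁ ≤ s₁) (hs12 : s₁ < s₂)
    (hr2s2 : r₂ ≤ s₂) (hs2i : s₂ + 2 ≤ i) (hin : i ≤ n) :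
    ((Finset.univ.filter (fun σ : Equiv.Perm (Fin n) =>
        (∀ t : Fin n, s₁ ≤ (t : ℕ) → (t : ℕ) < s₂ → r₁ < relRank n σ t) ∧
        (∀ t : Fin n, s₂ ≤ (t : ℕ) → (t : ℕ) ≤ i - 2 → r₂ < relRank n σ t))).card : ℝ)
      / (Nat.factorial n : ℝ)
    = ((Nat.descFactorial s₁ r₁ * Nat.descFactorial (s₂ - r₁) (r₂ - r₁) : ℕ) : ℝ)
      / (Nat.descFactorial (i - 1) r₂ : ℝ) := by
  have hi : ∀ t : ℕ, t ≤ i - 2 ↔ t < i - 1 := by omega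
  simp only [hi, ← forall_stepThreshold_lt_relRank_iff]
  rw [card_forall_lt_relRank_div_factorial,
    prod_range_stepThreshold hs12.le (by omega) (by omega),
    prod_Ico_sub_div_eq_descFactorial_div hr1s1 hs12.le,
    prod_Ico_sub_div_eq_descFactorial_div hr2s2 (by omega),
    ← Nat.descFactorial_mul_descFactorial hr12.le]
  have : (s₂.descFactorial r₁ : ℝ) ≠ 0 := Nat.cast_descFactorial_ne_zero (by omega)
  push_cast
  field_simp

/-- In a uniformly random permutation of `{1,...,n}` with relative ranks `Yᵢ`, for rank
levels `1 ≤ r₁ < r₂`, position thresholds `r₁ ≤ s₁ < s₂ ≤ n-1` with `r₂ ≤ s₂`, and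
`s₂+2 ≤ i ≤ n`, the probability
`P(min{Y_{s₁+1},...,Y_{s₂}} > r₁ ∧ min{Y_{s₂+1},...,Y_{i-1}} > r₂)`
equals `(s₁)_{r₁}·(s₂-r₁)_{r₂-r₁} / (i-1)_{r₂}`. -/
theorem prob_double_min_relRank_gt (n r₁ r₂ s₁ s₂ i : ℕ)
    (hr1 : 1 ≤ r₁) (hr12 : r₁ < r₂) (hr1s1 : r₁ ≤ s₁) (hs12 : s₁ < s₂)
    (hs2n : s₂ ≤ n - 1) (hr2s2 : r₂ ≤ s₂) (hs2i : s₂ + 2 ≤ i) (hin : i ≤ n) :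
    ((Finset.univ.filter (fun σ : Equiv.Perm (Fin n) =>
        (∀ t : Fin n, s₁ ≤ (t : ℕ) → (t : ℕ) < s₂ → r₁ < relRank n σ t) ∧
        (∀ t : Fin n, s₂ ≤ (t : ℕ) → (t : ℕ) ≤ i - 2 → r₂ < relRank n σ t))).card : ℝ)
      / (Nat.factorial n : ℝ)
    = ((Nat.descFactorial s₁ r₁ * Nat.descFactorial (s₂ - r₁) (r₂ - r₁) : ℕ) : ℝ)
      / (Nat.descFactorial (i - 1) r₂ : ℝ) :=
  prob_double_min_relRank_gt_general n r₁ r₂ s₁ s₂ i hr12 hr1s1 hs12 hr2s2 hs2i hin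
end

section
/- For the single-level policy π(s,r) with r ≤ s ≤ n-2 applied to a uniformly random permutation of n candidates, the probability of selecting a candidate of absolute rank ≤ b equals Σ_{i=s+1}^{n-1} [(s)_r/(i-1)_r]·( r/n + (1/n)Σ_{j=r+1}^{b} Σ_{k=1}^{r} C(j-1,k-1)C(n-j,i-k)/C(n-1,i-1) ) + [(s)_r/(n-1)_r]·(b/n). -/
open Finset

/-!
Deleting the last entry of a permutation of `Fin (m + 1)` and compressing the remaining values
order-preservingly is a bijection onto `Fin (m + 1) × Perm (Fin m)` which keeps the relative ranks
of the first `m` positions, while the last relative rank is the deleted value plus one. Iterating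
it, the relative ranks are independent with the `u`-th uniform on `{1, …, u + 1}`, so the
permutations that pass positions `s, …, t - 1` are counted by a product, and those that in
addition have relative rank `k + 1` and value `x` at position `t` by that product times
`C(x, k) C(n - 1 - x, t - k) (n - 1 - t)!`. Summing over the stopping position, over `x < b` and
`k < r`, and using Vandermonde's identity for the values `x < r`, gives the formula.
-/

namespace SLP

open Equiv

lemma sum_card_filter_const_and {α β : Type*} [Fintype α] [Fintype β] (P : α → Prop)
    (A : β → Prop) [DecidablePred P] [DecidablePred A] :
    ∑ y, #{b | P y ∧ A b} = #{y | P y} * #{b | A b} := by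
  rw [card_filter P, sum_mul]
  congr 1 with y
  split_ifs with h <;> simp [h]

lemma card_filter_exists_or {α ι : Type*} [Fintype α] [Fintype ι] [DecidableEq α]
    (P : ι → Prop) (E : ι → α → Prop) (L : α → Prop) [DecidablePred P]
    [∀ i, DecidablePred (E i)] [DecidablePred L]
    (hE : ∀ i j a, P i → P j → E i a → E j a → i = j) (hL : ∀ i a, P i → E i a → ¬ L a) :
    #{a | (∃ i, P i ∧ E i a) ∨ L a} = ∑ i with P i, #{a | E i a} + #{a | L a} := by
  rw [filter_or, card_union_of_disjoint (disjoint_filter.2 fun a _ ⟨i, hi, hia⟩ => hL i a hi hia),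
    ← card_biUnion fun i hi j hj hij => disjoint_filter.2 fun a _ hi' hj' =>
      hij (hE i j a (mem_filter.1 hi).2 (mem_filter.1 hj).2 hi' hj')]
  congr 2
  ext a
  simp

lemma card_filter_val_add_one {m : ℕ} (p : ℕ → Prop) [DecidablePred p] :
    #{x : Fin (m + 1) | p (x + 1)} = #{y ∈ Icc 1 (m + 1) | p y} := by
  refine card_nbij' (fun x => x.val + 1) (fun y => Fin.ofNat (m + 1) (y - 1)) ?_ ?_ ?_ ?_
  · intro x hx; simp_all [Nat.succ_le_of_lt x.isLt]
  · intro y hy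
    simp only [coe_filter, mem_Icc, mem_univ, true_and, Set.mem_ofPred_eq] at hy ⊢
    rw [Fin.val_ofNat, Nat.mod_eq_of_lt (by omega), Nat.sub_add_cancel hy.1.1]
    exact hy.2
  · intro x _; ext; simp
  · intro y hy
    simp only [coe_filter, mem_Icc, Set.mem_ofPred_eq] at hy
    simp only [Fin.val_ofNat, Nat.mod_eq_of_lt (show y - 1 < m + 1 by omega)]; omega

lemma val_succAbove_eq_iff {n : ℕ} (y : Fin (n + 1)) (z : Fin n) (x : ℕ) :
    (y.succAbove z : ℕ) = x ↔ (x < y ∧ (z : ℕ) = x) ∨ (y < x ∧ (z : ℕ) + 1 = x) := by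
  unfold Fin.succAbove
  split_ifs with h <;> simp only [Fin.lt_def, Fin.val_castSucc, Fin.val_succ] at h ⊢ <;> omega

lemma sum_card_filter_val_succAbove_eq {β : Type*} [Fintype β] {n : ℕ} (B : β → Prop)
    [DecidablePred B] (g : β → Fin n) {x : ℕ} (hx : x ≤ n) :
    ∑ y : Fin (n + 1), #{b | B b ∧ (y.succAbove (g b) : ℕ) = x} =
      (n - x) * #{b | B b ∧ (g b : ℕ) = x} + x * #{b | B b ∧ (g b : ℕ) + 1 = x} := by
  have fiber : ∀ y : Fin (n + 1), #{b | B b ∧ (y.succAbove (g b) : ℕ) = x} =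
      (if x < y then #{b | B b ∧ (g b : ℕ) = x} else 0) +
        (if (y : ℕ) < x then #{b | B b ∧ (g b : ℕ) + 1 = x} else 0) := by
    intro y
    simp only [val_succAbove_eq_iff]
    split_ifs with h1 h2 h2
    · omega
    · rw [add_zero]
      exact congrArg card (filter_congr fun b _ => and_congr_right fun _ => by omega)
    · rw [zero_add]
      exact congrArg card (filter_congr fun b _ => and_congr_right fun _ => by omega)
    · simp only [add_zero, card_eq_zero, filter_eq_empty_iff]
      omega
  have above : #{y : Fin (n + 1) | x < (y : ℕ)} = n - x := by
    have := card_filter_add_card_filter_not (s := univ) (fun y : Fin (n + 1) => (y : ℕ) < x + 1)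
    simp only [Fin.card_filter_val_lt, card_univ, Fintype.card_fin, not_lt,
      Nat.succ_le_iff] at this
    omega
  simp only [fiber, sum_add_distrib, sum_ite, sum_const, smul_eq_mul, mul_zero, add_zero,
    above, Fin.card_filter_val_lt]
  rw [min_eq_right (by omega)]

lemma mul_choose_sub_one (b j : ℕ) : b * (b - 1).choose j = (b - j) * b.choose j := by
  rcases b with _ | b
  · simp
  · simpa [mul_comm] using Nat.choose_mul_succ_eq b j

lemma choose_mul_choose_recurrence (a b k j : ℕ) :
    b * (a.choose k * (b - 1).choose j) + a * ((a - 1).choose k * b.choose j) =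
      (a + b - (k + j)) * (a.choose k * b.choose j) := by
  rcases lt_or_ge a k with hak | hak
  · simp [Nat.choose_eq_zero_of_lt hak, Nat.choose_eq_zero_of_lt (show a - 1 < k by omega)]
  rcases lt_or_ge b j with hbj | hbj
  · simp [Nat.choose_eq_zero_of_lt hbj, Nat.choose_eq_zero_of_lt (show b - 1 < j by omega)]
  calc _ = (b * (b - 1).choose j) * a.choose k + (a * (a - 1).choose k) * b.choose j := by ring
    _ = ((b - j) + (a - k)) * (a.choose k * b.choose j) := by
      rw [mul_choose_sub_one, mul_choose_sub_one]; ring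
    _ = _ := by congr 1; omega

lemma choose_mul_choose_sub_self (x k t : ℕ) (hx : x ≤ t) (hk : k ≤ t) :
    x.choose k * (t - x).choose (t - k) = if k = x then 1 else 0 := by
  split_ifs with h
  · simp [h]
  rcases lt_or_gt_of_ne h with h | h
  · rw [Nat.choose_eq_zero_of_lt (show t - x < t - k by omega), mul_zero]
  · rw [Nat.choose_eq_zero_of_lt h, zero_mul]

lemma sum_range_choose_mul_choose {x r t N : ℕ} (hxr : x < r) (hrt : r ≤ t + 1) (hxN : x ≤ N) :
    ∑ k ∈ range r, x.choose k * (N - x).choose (t - k) = N.choose t := by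
  rw [← Nat.add_sub_cancel' hxN, Nat.add_choose_eq, Nat.sum_antidiagonal_eq_sum_range_succ_mk,
    Nat.add_sub_cancel' hxN]
  refine sum_subset (range_subset_range.2 hrt) fun k hk hkr => ?_
  simp only [mem_range, not_lt] at hkr
  rw [Nat.choose_eq_zero_of_lt (by omega), zero_mul]

lemma sum_range_sum_range_choose_mul_choose {b r t n : ℕ} (hrb : r ≤ b) (hrt : r ≤ t + 1)
    (hbn : b ≤ n) :
    ∑ x ∈ range b, ∑ k ∈ range r, x.choose k * (n - 1 - x).choose (t - k) =
      r * (n - 1).choose t + ∑ j ∈ Icc (r + 1) b, ∑ k ∈ Icc 1 r,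
        (j - 1).choose (k - 1) * (n - j).choose (t + 1 - k) := by
  rw [← sum_range_add_sum_Ico _ hrb,
    sum_congr rfl fun x hx => sum_range_choose_mul_choose (mem_range.1 hx) hrt (by
      simp only [mem_range] at hx; omega),
    sum_const, card_range, smul_eq_mul, ← Ico_add_one_right_eq_Icc, ← sum_Ico_add']
  congr 1
  refine sum_congr rfl fun x hx => ?_
  rw [← Ico_add_one_right_eq_Icc, ← Nat.Ico_zero_eq_range, ← zero_add 1, ← sum_Ico_add']
  refine sum_congr rfl fun k _ => ?_
  simp only [mem_Ico] at hx
  rw [Nat.add_sub_cancel, Nat.add_sub_cancel, show n - (x + 1) = n - 1 - x by omega,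
    Nat.add_sub_add_right]

section initPerm

variable {m : ℕ}

def initPerm (σ : Perm (Fin (m + 1))) : Perm (Fin m) :=
  (finSuccAboveEquiv (Fin.last m)).trans
    ((σ.subtypeEquiv (q := (· ≠ σ (Fin.last m))) fun _ => σ.injective.ne_iff.symm).trans
      (finSuccAboveEquiv (σ (Fin.last m))).symm)

lemma succAbove_initPerm (σ : Perm (Fin (m + 1))) (u : Fin m) :
    (σ (Fin.last m)).succAbove (initPerm σ u) = σ u.castSucc := by
  have hu : σ u.castSucc ≠ σ (Fin.last m) := σ.injective.ne (Fin.castSucc_lt_last u).ne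
  have : initPerm σ u = (finSuccAboveEquiv (σ (Fin.last m))).symm ⟨σ u.castSucc, hu⟩ := by
    simp [initPerm, finSuccAboveEquiv_apply]
  rw [this]
  exact congrArg Subtype.val ((finSuccAboveEquiv _).apply_symm_apply _)

lemma bijective_last_initPerm :
    Function.Bijective fun σ : Perm (Fin (m + 1)) => (σ (Fin.last m), initPerm σ) := by
  refine (Fintype.bijective_iff_injective_and_card _).2 ⟨fun σ σ' h => ?_, ?_⟩
  · simp only [Prod.mk.injEq] at h
    ext i : 1
    induction i using Fin.lastCases with
    | last => exact h.1
    | cast u => rw [← succAbove_initPerm, ← succAbove_initPerm, h.1, h.2]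
  · simp [Fintype.card_perm, Nat.factorial_succ]

lemma card_filter_perm_succ (P : Fin (m + 1) → Perm (Fin m) → Prop) [∀ x, DecidablePred (P x)] :
    #{σ : Perm (Fin (m + 1)) | P (σ (Fin.last m)) (initPerm σ)} = ∑ x, #{τ | P x τ} := by
  rw [card_equiv (Equiv.ofBijective _ bijective_last_initPerm)
    (t := univ.filter fun p => P p.1 p.2) (by simp)]
  simp only [card_filter, Fintype.sum_prod_type]

lemma relRank_castSucc (σ : Perm (Fin (m + 1))) (u : Fin m) :
    relRank (m + 1) σ u.castSucc = relRank m (initPerm σ) u := by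
  simp only [relRank, card_filter, Fin.sum_univ_castSucc, ← succAbove_initPerm,
    Fin.succAbove_le_succAbove_iff, Fin.castSucc_le_castSucc_iff]
  simp [(Fin.castSucc_lt_last u).not_ge]

lemma relRank_last (σ : Perm (Fin (m + 1))) :
    relRank (m + 1) σ (Fin.last m) = σ (Fin.last m) + 1 := by
  simp only [relRank, Fin.le_last, true_and, card_filter]
  rw [Equiv.sum_comp σ (fun y => if y ≤ σ (Fin.last m) then 1 else 0), ← card_filter,
    ← Fin.card_Iic]
  congr 1; ext; simp

end initPerm

lemma relRank_pos {n : ℕ} (σ : Perm (Fin n)) (t : Fin n) : 0 < relRank n σ t :=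
  card_pos.2 ⟨t, by simp⟩

section rankSeqCount

variable (Q : ℕ → ℕ → Prop) [∀ u, DecidablePred (Q u)]

def rankSeqCount (t : ℕ) : ℕ :=
  ∏ u ∈ range t, #{y ∈ Icc 1 (u + 1) | Q u y}

theorem card_perm_forall_relRank (n : ℕ) :
    #{σ : Perm (Fin n) | ∀ u : Fin n, Q u (relRank n σ u)} = rankSeqCount Q n := by
  induction n with
  | zero => simp [rankSeqCount]
  | succ m ih =>
    have hiff : ∀ σ : Perm (Fin (m + 1)), (∀ u : Fin (m + 1), Q u (relRank (m + 1) σ u)) ↔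
        Q m (σ (Fin.last m) + 1) ∧ ∀ u : Fin m, Q u (relRank m (initPerm σ) u) := by
      simp [Fin.forall_fin_succ', relRank_castSucc, relRank_last, and_comm]
    simp only [hiff]
    rw [card_filter_perm_succ (fun x τ => Q m (x + 1) ∧ ∀ u : Fin m, Q u (relRank m τ u)),
      sum_card_filter_const_and, rankSeqCount, prod_range_succ, ← rankSeqCount, ← ih,
      ← card_filter_val_add_one, mul_comm]

lemma card_perm_relRank_val_last {t k x : ℕ} (hx : x < t + 1) :
    #{σ : Perm (Fin (t + 1)) | (∀ u : Fin (t + 1), u < t → Q u (relRank _ σ u)) ∧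
        relRank _ σ (Fin.last t) = k + 1 ∧ (σ (Fin.last t) : ℕ) = x} =
      rankSeqCount Q t * if k = x then 1 else 0 := by
  have hiff : ∀ σ : Perm (Fin (t + 1)),
      ((∀ u : Fin (t + 1), u < t → Q u (relRank _ σ u)) ∧
        relRank _ σ (Fin.last t) = k + 1 ∧ (σ (Fin.last t) : ℕ) = x) ↔
      ((σ (Fin.last t) : ℕ) = k ∧ (σ (Fin.last t) : ℕ) = x) ∧
        ∀ u : Fin t, Q u (relRank t (initPerm σ) u) := by
    simp [Fin.forall_fin_succ', relRank_castSucc, relRank_last, and_comm]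
  simp only [hiff]
  rw [card_filter_perm_succ (fun y τ => ((y : ℕ) = k ∧ (y : ℕ) = x) ∧
    ∀ u : Fin t, Q u (relRank t τ u)), sum_card_filter_const_and, card_perm_forall_relRank,
    mul_comm]
  split_ifs with h
  · subst h
    rw [card_eq_one.2 ⟨⟨k, hx⟩, by ext; simp [Fin.ext_iff]⟩]
  · simp only [mul_zero, mul_eq_zero, card_eq_zero, filter_eq_empty_iff]
    exact Or.inr fun y _ hy => by omega

lemma card_perm_relRank_val_castSucc {n t k x : ℕ} (ht : t < n) (hx : x ≤ n) :
    #{σ : Perm (Fin (n + 1)) | (∀ u : Fin (n + 1), u < t → Q u (relRank _ σ u)) ∧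
        relRank _ σ (⟨t, ht⟩ : Fin n).castSucc = k + 1 ∧
        (σ (⟨t, ht⟩ : Fin n).castSucc : ℕ) = x} =
      (n - x) * #{τ : Perm (Fin n) | (∀ u : Fin n, u < t → Q u (relRank n τ u)) ∧
        relRank n τ ⟨t, ht⟩ = k + 1 ∧ (τ ⟨t, ht⟩ : ℕ) = x} +
      x * #{τ : Perm (Fin n) | (∀ u : Fin n, u < t → Q u (relRank n τ u)) ∧
        relRank n τ ⟨t, ht⟩ = k + 1 ∧ (τ ⟨t, ht⟩ : ℕ) + 1 = x} := by
  have hiff : ∀ σ : Perm (Fin (n + 1)),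
      ((∀ u : Fin (n + 1), u < t → Q u (relRank _ σ u)) ∧
        relRank _ σ (⟨t, ht⟩ : Fin n).castSucc = k + 1 ∧
        (σ (⟨t, ht⟩ : Fin n).castSucc : ℕ) = x) ↔
      ((∀ u : Fin n, u < t → Q u (relRank n (initPerm σ) u)) ∧
        relRank n (initPerm σ) ⟨t, ht⟩ = k + 1) ∧
        ((σ (Fin.last n)).succAbove (initPerm σ ⟨t, ht⟩) : ℕ) = x := by
    intro σ
    have hnt : ¬ n < t := by omega
    rw [← succAbove_initPerm, Fin.forall_fin_succ']
    simp only [relRank_castSucc, Fin.val_castSucc, Fin.val_last, hnt, false_imp_iff, and_true,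
      and_assoc]
  simp only [hiff]
  rw [card_filter_perm_succ (fun y τ => ((∀ u : Fin n, u < t → Q u (relRank n τ u)) ∧
    relRank n τ ⟨t, ht⟩ = k + 1) ∧ (y.succAbove (τ ⟨t, ht⟩) : ℕ) = x),
    sum_card_filter_val_succAbove_eq _ _ hx]
  simp only [and_assoc]

/-- Of the values other than `x`, the first `t` positions take `k` of the `x` smaller ones and
`t - k` of the `n - 1 - x` larger ones. -/
theorem card_perm_relRank_val {t k : ℕ} (hk : k ≤ t) {n : ℕ} (ht : t < n) {x : ℕ}
    (hx : x < n) :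
    #{σ : Perm (Fin n) | (∀ u : Fin n, u < t → Q u (relRank n σ u)) ∧
        relRank n σ ⟨t, ht⟩ = k + 1 ∧ (σ ⟨t, ht⟩ : ℕ) = x} =
      rankSeqCount Q t * (x.choose k * (n - 1 - x).choose (t - k)) * (n - 1 - t).factorial := by
  induction n, ht using Nat.le_induction generalizing x with
  | base =>
    rw [show (⟨t, Nat.lt_succ_self t⟩ : Fin t.succ) = Fin.last t from rfl,
      card_perm_relRank_val_last Q hx, Nat.succ_sub_one,
      choose_mul_choose_sub_self x k t (by omega) hk]
    simp
  | succ n ht ih =>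
    rw [show (⟨t, Nat.lt_succ_of_lt ht⟩ : Fin (n + 1)) = (⟨t, ht⟩ : Fin n).castSucc from rfl,
      card_perm_relRank_val_castSucc Q ht (by omega)]
    have above : (n - x) * #{τ : Perm (Fin n) | (∀ u : Fin n, u < t → Q u (relRank n τ u)) ∧
        relRank n τ ⟨t, ht⟩ = k + 1 ∧ (τ ⟨t, ht⟩ : ℕ) = x} =
        (n - x) * (rankSeqCount Q t * (x.choose k * (n - 1 - x).choose (t - k)) *
          (n - 1 - t).factorial) := by
      rcases (by omega : x = n ∨ x < n) with rfl | h
      · simp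
      · rw [ih h]
    have below : x * #{τ : Perm (Fin n) | (∀ u : Fin n, u < t → Q u (relRank n τ u)) ∧
        relRank n τ ⟨t, ht⟩ = k + 1 ∧ (τ ⟨t, ht⟩ : ℕ) + 1 = x} =
        x * (rankSeqCount Q t * ((x - 1).choose k * (n - x).choose (t - k)) *
          (n - 1 - t).factorial) := by
      rcases x with _ | x
      · simp
      · simp only [Nat.add_right_cancel_iff, ih (by omega : x < n), Nat.add_sub_cancel]
        congr 5
        omega
    have key := choose_mul_choose_recurrence x (n - x) k (t - k)
    rw [show x + (n - x) - (k + (t - k)) = n - t by omega,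
      show n - x - 1 = n - 1 - x by omega] at key
    rw [above, below, show n + 1 - 1 - x = n - x by omega,
      show n + 1 - 1 - t = n - 1 - t + 1 by omega, Nat.factorial_succ,
      show n - 1 - t + 1 = n - t by omega]
    calc _ = rankSeqCount Q t * (n - 1 - t).factorial * ((n - x) * (x.choose k *
          (n - 1 - x).choose (t - k)) + x * ((x - 1).choose k * (n - x).choose (t - k))) := by
          ring
      _ = _ := by rw [key]; ring

end rankSeqCount

def passCount (s r t : ℕ) : ℕ := rankSeqCount (fun u y => s ≤ u → r < y) t

lemma passCount_mul_descFactorial {s r t : ℕ} (hst : s ≤ t) :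
    passCount s r t * t.descFactorial r = t.factorial * s.descFactorial r := by
  induction t, hst using Nat.le_induction with
  | base =>
    rw [passCount, rankSeqCount, ← prod_range_add_one_eq_factorial]
    congr 1
    refine prod_congr rfl fun u hu => ?_
    rw [filter_true_of_mem fun y _ h => absurd h (by rw [mem_range] at hu; omega), Nat.card_Icc]
    omega
  | succ t hst ih =>
    have step : #{y ∈ Icc 1 (t + 1) | s ≤ t → r < y} = t + 1 - r := by
      rw [filter_congr (q := (r < ·)) fun y _ => by simp [hst]]
      rw [show {y ∈ Icc 1 (t + 1) | r < y} = Ioc r (t + 1) by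
        ext; simp only [mem_filter, mem_Icc, mem_Ioc]; omega, Nat.card_Ioc]
    rw [passCount, rankSeqCount, prod_range_succ, ← rankSeqCount, ← passCount, step,
      Nat.factorial_succ]
    calc _ = passCount s r t * ((t + 1 - r) * (t + 1).descFactorial r) := by ring
      _ = (t + 1) * (passCount s r t * t.descFactorial r) := by rw [Nat.succ_descFactorial]; ring
      _ = _ := by rw [ih]; ring

lemma passCount_mul_factorial_div {n s r t : ℕ} (hst : s ≤ t) (hrt : r ≤ t) (htn : t < n) :
    ((passCount s r t * (n - 1 - t).factorial : ℕ) : ℝ) / n.factorial =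
      (s.descFactorial r : ℝ) / t.descFactorial r / (n * (n - 1).choose t) := by
  have hd : t.descFactorial r ≠ 0 := by rw [Ne, Nat.descFactorial_eq_zero_iff_lt]; omega
  have hC : (n - 1).choose t ≠ 0 := (Nat.choose_pos (by omega)).ne'
  rw [div_div, div_eq_div_iff (by positivity) (mul_ne_zero (by exact_mod_cast hd)
    (mul_ne_zero (by exact_mod_cast (by omega : n ≠ 0)) (by exact_mod_cast hC)))]
  have key : passCount s r t * (n - 1 - t).factorial * (t.descFactorial r * (n * (n - 1).choose t))
      = s.descFactorial r * n.factorial := by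
    calc _ = passCount s r t * t.descFactorial r * (n * ((n - 1).choose t * (n - 1 - t).factorial))
          := by ring
      _ = s.descFactorial r * (n * ((n - 1).choose t * t.factorial * (n - 1 - t).factorial)) := by
          rw [passCount_mul_descFactorial hst]; ring
      _ = _ := by rw [Nat.choose_mul_factorial_mul_factorial (by omega), Nat.mul_factorial_pred
          (by omega)]
  exact_mod_cast key

lemma card_select_at {n s r b : ℕ} (t : Fin n) (hrs : r ≤ s) (hst : s ≤ t) (hbn : b ≤ n) :
    #{σ : Perm (Fin n) | relRank n σ t ≤ r ∧
        (∀ u : Fin n, s ≤ (u : ℕ) → (u : ℕ) < t → r < relRank n σ u) ∧ (σ t : ℕ) + 1 ≤ b} =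
      passCount s r t * (n - 1 - t).factorial *
        ∑ x ∈ range b, ∑ k ∈ range r, x.choose k * (n - 1 - x).choose (t - k) := by
  rw [card_eq_sum_card_fiberwise (f := fun σ => ((σ t : ℕ), relRank n σ t - 1))
    (t := range b ×ˢ range r) fun σ hσ => by
      simp only [coe_filter, mem_univ, true_and, Set.mem_ofPred_eq] at hσ
      have := relRank_pos σ t
      simp only [coe_product, coe_range, Set.mem_prod, Set.mem_Iio]
      omega,
    sum_product, mul_sum]
  refine sum_congr rfl fun x hx => ?_
  rw [mul_sum]
  refine sum_congr rfl fun k hk => ?_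
  simp only [mem_range] at hx hk
  have count := card_perm_relRank_val (fun u y => s ≤ u → r < y) (by omega : k ≤ t) t.isLt
    (by omega : x < n)
  simp only [Fin.eta] at count
  rw [filter_filter, passCount, mul_right_comm, ← count]
  congr 1
  ext σ
  have := relRank_pos σ t
  simp only [mem_filter, mem_univ, true_and, Prod.mk.injEq]
  constructor
  · rintro ⟨⟨-, hpass, -⟩, rfl, hk⟩
    exact ⟨fun u hut hsu => hpass u hsu hut, by omega, rfl⟩
  · rintro ⟨hpass, hrank, rfl⟩
    exact ⟨⟨by omega, fun u hsu hut => hpass u hut hsu, by omega⟩, rfl, by omega⟩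

lemma card_pass_to_last {n s r b : ℕ} (last : Fin n) (hlast : (last : ℕ) = n - 1) (hn : 2 ≤ n)
    (hbn : b ≤ n) :
    #{σ : Perm (Fin n) | (∀ t : Fin n, s ≤ (t : ℕ) → (t : ℕ) ≤ n - 2 → r < relRank n σ t) ∧
        (σ last : ℕ) + 1 ≤ b} = passCount s r (n - 1) * b := by
  obtain ⟨m, rfl⟩ : ∃ m, n = m + 1 := ⟨n - 1, by omega⟩
  obtain rfl : last = Fin.last m := Fin.ext hlast
  have hiff : ∀ σ : Perm (Fin (m + 1)),
      ((∀ t : Fin (m + 1), s ≤ (t : ℕ) → (t : ℕ) ≤ m + 1 - 2 → r < relRank _ σ t) ∧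
        (σ (Fin.last m) : ℕ) + 1 ≤ b) ↔
      (σ (Fin.last m) : ℕ) < b ∧ ∀ u : Fin m, s ≤ (u : ℕ) → r < relRank m (initPerm σ) u := by
    intro σ
    have hm : ¬ m ≤ m + 1 - 2 := by omega
    simp only [Fin.forall_fin_succ', relRank_castSucc, Fin.val_castSucc, Fin.val_last, hm,
      false_imp_iff, imp_true_iff, and_true, Nat.succ_le_iff]
    rw [and_comm]
    exact and_congr_right fun _ => forall_congr' fun u =>
      ⟨fun h hsu => h hsu (by omega), fun h hsu _ => h hsu⟩
  simp only [hiff]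
  rw [card_filter_perm_succ (fun y τ => (y : ℕ) < b ∧ ∀ u : Fin m, s ≤ (u : ℕ) → r < relRank m τ u),
    sum_card_filter_const_and, card_perm_forall_relRank (fun u y => s ≤ u → r < y),
    Fin.card_filter_val_lt, min_eq_right hbn, mul_comm, Nat.add_sub_cancel, passCount]

lemma card_win {n s r b : ℕ} (last : Fin n) (hlast : (last : ℕ) = n - 1) (hn : 2 ≤ n)
    (hrs : r ≤ s) (hbn : b ≤ n) :
    #{σ : Perm (Fin n) |
        (∃ t : Fin n, s ≤ (t : ℕ) ∧ (t : ℕ) ≤ n - 2 ∧ relRank n σ t ≤ r ∧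
          (∀ u : Fin n, s ≤ (u : ℕ) → (u : ℕ) < (t : ℕ) → r < relRank n σ u) ∧
          (σ t : ℕ) + 1 ≤ b) ∨
        ((∀ t : Fin n, s ≤ (t : ℕ) → (t : ℕ) ≤ n - 2 → r < relRank n σ t) ∧
          (σ last : ℕ) + 1 ≤ b)} =
      ∑ t ∈ univ.filter (fun t : Fin n => s ≤ (t : ℕ) ∧ (t : ℕ) ≤ n - 2),
        passCount s r t * (n - 1 - t).factorial *
          ∑ x ∈ range b, ∑ k ∈ range r, x.choose k * (n - 1 - x).choose (t - k) +
        passCount s r (n - 1) * b := by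
  have decomp := card_filter_exists_or (fun t : Fin n => s ≤ (t : ℕ) ∧ (t : ℕ) ≤ n - 2)
    (fun t σ => relRank n σ t ≤ r ∧
      (∀ u : Fin n, s ≤ (u : ℕ) → (u : ℕ) < (t : ℕ) → r < relRank n σ u) ∧ (σ t : ℕ) + 1 ≤ b)
    (fun σ => (∀ t : Fin n, s ≤ (t : ℕ) → (t : ℕ) ≤ n - 2 → r < relRank n σ t) ∧
      (σ last : ℕ) + 1 ≤ b)
    (fun t t' σ ht ht' hsel hsel' => by
      by_contra hne
      rcases lt_or_gt_of_ne (Fin.val_injective.ne hne) with h | h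
      · exact (hsel'.2.1 t ht.1 h).not_ge hsel.1
      · exact (hsel.2.1 t' ht'.1 h).not_ge hsel'.1)
    (fun t σ ht hsel hpass => (hpass.1 t ht.1 ht.2).not_ge hsel.1)
  simp only [and_assoc] at decomp
  rw [decomp, card_pass_to_last last hlast hn hbn]
  congr 1
  exact sum_congr rfl fun t ht => card_select_at t hrs (mem_filter.1 ht).2.1 hbn

lemma select_at_div_factorial {n s r b t : ℕ} (hrb : r ≤ b) (hbn : b ≤ n) (hrs : r ≤ s)
    (hst : s ≤ t) (htn : t < n) :
    ((passCount s r t * (n - 1 - t).factorial *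
        ∑ x ∈ range b, ∑ k ∈ range r, x.choose k * (n - 1 - x).choose (t - k) : ℕ) : ℝ) /
        n.factorial =
      (s.descFactorial r : ℝ) / t.descFactorial r * ((r : ℝ) / n + 1 / n *
        ∑ j ∈ Icc (r + 1) b, ∑ k ∈ Icc 1 r,
          (((j - 1).choose (k - 1) * (n - j).choose (t + 1 - k) : ℕ) : ℝ) / (n - 1).choose t) := by
  have hC : ((n - 1).choose t : ℝ) ≠ 0 := by exact_mod_cast (Nat.choose_pos (by omega)).ne'
  rw [sum_range_sum_range_choose_mul_choose hrb (by omega) hbn, Nat.cast_mul,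
    mul_div_right_comm, passCount_mul_factorial_div hst (by omega) htn]
  simp only [← sum_div]
  push_cast
  field_simp

lemma pass_to_last_div_factorial {n s r b : ℕ} (hrs : r ≤ s) (hsn : s < n) :
    ((passCount s r (n - 1) * b : ℕ) : ℝ) / n.factorial =
      (s.descFactorial r : ℝ) / (n - 1).descFactorial r * ((b : ℝ) / n) := by
  have h := passCount_mul_factorial_div (n := n) (s := s) (r := r) (t := n - 1) (by omega)
    (by omega) (by omega)
  rw [Nat.sub_self, Nat.factorial_zero, mul_one, Nat.choose_self, Nat.cast_one, mul_one] at h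
  rw [Nat.cast_mul, mul_div_right_comm, h]
  ring

lemma sum_filter_fin_eq_sum_Icc {M : Type*} [AddCommMonoid M] {n s : ℕ} (hn : 2 ≤ n)
    (g : ℕ → M) :
    ∑ t ∈ univ.filter (fun t : Fin n => s ≤ (t : ℕ) ∧ (t : ℕ) ≤ n - 2), g (t + 1) =
      ∑ i ∈ Icc (s + 1) (n - 1), g i := by
  refine sum_bij' (fun t _ => t + 1) (fun i hi => ⟨i - 1, by rw [mem_Icc] at hi; omega⟩)
    (fun t ht => ?_) (fun i hi => ?_) (fun t _ => by simp) (fun i hi => ?_) (fun t _ => rfl)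
  · rw [mem_filter] at ht
    rw [mem_Icc]
    omega
  · rw [mem_Icc] at hi
    simp only [mem_filter, mem_univ, true_and]
    omega
  · rw [mem_Icc] at hi
    dsimp only
    omega

end SLP

/-- Winning probability of the single-level policy `π(s,r)` with `r ≤ s ≤ n-2`:
`P_SLP(π(s,r)) = Σ_{i=s+1}^{n-1} [(s)_r/(i-1)_r]·( r/n +
(1/n)Σ_{j=r+1}^{b} Σ_{k=1}^{r} C(j-1,k-1)C(n-j,i-k)/C(n-1,i-1) ) + [(s)_r/(n-1)_r]·(b/n)`. -/
theorem slp_win_prob (n s r b : ℕ) (hr1 : 1 ≤ r) (hrb : r ≤ b) (hbn : b ≤ n)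
    (hrs : r ≤ s) (hsn : s ≤ n - 2) :
    ((Finset.univ.filter (fun σ : Equiv.Perm (Fin n) =>
        (∃ t : Fin n, s ≤ (t : ℕ) ∧ (t : ℕ) ≤ n - 2 ∧ relRank n σ t ≤ r ∧
          (∀ u : Fin n, s ≤ (u : ℕ) → (u : ℕ) < (t : ℕ) → r < relRank n σ u) ∧
          (σ t : ℕ) + 1 ≤ b) ∨
        ((∀ t : Fin n, s ≤ (t : ℕ) → (t : ℕ) ≤ n - 2 → r < relRank n σ t) ∧
          (σ ⟨n - 1, by omega⟩ : ℕ) + 1 ≤ b))).card : ℝ)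
      / (Nat.factorial n : ℝ)
    = (∑ i ∈ Finset.Icc (s + 1) (n - 1),
        ((Nat.descFactorial s r : ℝ) / (Nat.descFactorial (i - 1) r : ℝ)) *
          ((r : ℝ) / (n : ℝ) + (1 / (n : ℝ)) *
            ∑ j ∈ Finset.Icc (r + 1) b, ∑ k ∈ Finset.Icc 1 r,
              ((Nat.choose (j - 1) (k - 1) * Nat.choose (n - j) (i - k) : ℕ) : ℝ)
                / (Nat.choose (n - 1) (i - 1) : ℝ)))
      + ((Nat.descFactorial s r : ℝ) / (Nat.descFactorial (n - 1) r : ℝ)) *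
          ((b : ℝ) / (n : ℝ)) := by
  have hn : 2 ≤ n := by omega
  rw [SLP.card_win _ rfl hn hrs hbn, Nat.cast_add, add_div, Nat.cast_sum, sum_div,
    SLP.pass_to_last_div_factorial hrs (by omega), ← SLP.sum_filter_fin_eq_sum_Icc hn]
  congr 1
  refine sum_congr rfl fun t ht => ?_
  rw [SLP.select_at_div_factorial hrb hbn hrs (mem_filter.1 ht).2.1 t.isLt, Nat.add_sub_cancel]
end

section
/- Fix 1 ≤ r ≤ b and let s(n) = αn + o(n) with α ∈ (0,1). Then the winning probability P_SLP^(n)(π(s(n),r)) of the single-level policy converges, as n → ∞, to α^r · ∫_α^1 (1/x^r)·( r + Σ_{j=r+1}^{b} Σ_{k=1}^{r} C(j-1,k-1) x^{k-1} (1-x)^{j-k} ) dx. -/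
open Filter Finset

/-- Exact winning probability formula of the single-level policy `π(s,r)` for `n` candidates
and worst allowable rank `b` (valid for `r ≤ s ≤ n-2`). -/
noncomputable def Pslp (n b s r : ℕ) : ℝ :=
  (∑ i ∈ Finset.Icc (s + 1) (n - 1),
      ((Nat.descFactorial s r : ℝ) / (Nat.descFactorial (i - 1) r : ℝ)) *
        ((r : ℝ) / (n : ℝ) + (1 / (n : ℝ)) *
          ∑ j ∈ Finset.Icc (r + 1) b, ∑ k ∈ Finset.Icc 1 r,
            ((Nat.choose (j - 1) (k - 1) * Nat.choose (n - j) (i - k) : ℕ) : ℝ)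
              / (Nat.choose (n - 1) (i - 1) : ℝ)))
    + ((Nat.descFactorial s r : ℝ) / (Nat.descFactorial (n - 1) r : ℝ)) * ((b : ℝ) / (n : ℝ))

/-!
`Pslp n b s r` is a Riemann sum: writing `i = ⌊n x⌋ + 1`, `n` times its `i`-th summand is a step
function of `x ∈ (0, 1)` which vanishes for `x < α` and, for `α < x < 1`, converges to
`(α / x) ^ r * (r + Σ_j Σ_k C(j-1,k-1) x^(k-1) (1-x)^(j-k))`: the ratio of falling factorials
`(s)_r / (i-1)_r` tends to `(α / x) ^ r`, and each hypergeometric weight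
`C(n-j, i-k) / C(n-1, i-1)`, a ratio of falling factorials of total degree zero, tends to its
binomial limit. Vandermonde's identity bounds the step functions by `r + b`, so dominated
convergence gives the integral; the boundary term is `O(1/n)`.
-/

open MeasureTheory Topology

theorem integral_comp_natFloor_mul (g : ℕ → ℝ) {n : ℕ} (hn : n ≠ 0) :
    ∫ x in (0 : ℝ)..1, g ⌊(n : ℝ) * x⌋₊ = (∑ m ∈ range n, g m) / n := by
  have hfloor (m : ℕ) :
      Set.EqOn (fun y : ℝ => g ⌊y⌋₊) (fun _ => g m) (Set.Ioo (m : ℝ) (m + 1 : ℕ)) := by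
    intro y hy
    simp only [Nat.floor_eq_on_Ico m y ⟨hy.1.le, by exact_mod_cast hy.2⟩]
  have hle (m : ℕ) : (m : ℝ) ≤ (m + 1 : ℕ) := by norm_num
  have hunit (m : ℕ) : ∫ y in (m : ℝ)..(m + 1 : ℕ), g ⌊y⌋₊ = g m := by
    rw [intervalIntegral.integral_of_le (hle m), integral_Ioc_eq_integral_Ioo,
      setIntegral_congr_fun measurableSet_Ioo (hfloor m)]
    simp
  have hint (m : ℕ) (_ : m < n) :
      IntervalIntegrable (fun y : ℝ => g ⌊y⌋₊) volume (m : ℝ) (m + 1 : ℕ) :=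
    (intervalIntegrable_iff_integrableOn_Ioo_of_le (hle m)).2
      ((integrableOn_const (C := g m) measure_Ioo_lt_top.ne).congr_fun (hfloor m).symm
        measurableSet_Ioo)
  rw [intervalIntegral.integral_comp_mul_left (fun y => g ⌊y⌋₊) (Nat.cast_ne_zero.2 hn),
    mul_zero, mul_one]
  have := intervalIntegral.sum_integral_adjacent_intervals (a := fun m : ℕ => (m : ℝ)) hint
  simp only [Nat.cast_zero, hunit] at this
  rw [← this, smul_eq_mul, inv_mul_eq_div]

theorem tendsto_sum_range_div_of_tendsto_comp_natFloor {g : ℕ → ℕ → ℝ} {f : ℝ → ℝ} {C : ℝ}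
    (hbound : ∀ᶠ n in atTop, ∀ m, |g n m| ≤ C)
    (hlim : ∀ᵐ x, x ∈ Set.Ioo (0 : ℝ) 1 →
      Tendsto (fun n : ℕ => g n ⌊(n : ℝ) * x⌋₊) atTop (𝓝 (f x))) :
    Tendsto (fun n : ℕ => (∑ m ∈ range n, g n m) / n) atTop (𝓝 (∫ x in (0 : ℝ)..1, f x)) := by
  have hdct : Tendsto (fun n : ℕ => ∫ x in (0 : ℝ)..1, g n ⌊(n : ℝ) * x⌋₊) atTop
      (𝓝 (∫ x in (0 : ℝ)..1, f x)) := by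
    refine intervalIntegral.tendsto_integral_filter_of_dominated_convergence (fun _ => C)
      (Eventually.of_forall fun n => ?_) ?_ intervalIntegrable_const ?_
    · exact (measurable_from_nat.comp
        (Nat.measurable_floor.comp (measurable_const_mul _))).aestronglyMeasurable
    · filter_upwards [hbound] with n hn
      exact Eventually.of_forall fun x _ => (Real.norm_eq_abs _).trans_le (hn _)
    · filter_upwards [hlim, measure_eq_zero_iff_ae_notMem.1 (measure_singleton (1 : ℝ))]
        with x hx hx1 hmem
      rw [Set.uIoc_of_le zero_le_one] at hmem
      exact hx ⟨hmem.1, lt_of_le_of_ne hmem.2 hx1⟩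
  refine hdct.congr' ?_
  filter_upwards [eventually_ne_atTop 0] with n hn
  exact integral_comp_natFloor_mul (g n) hn

theorem integral_indicator_Ioi {f : ℝ → ℝ} {a b c : ℝ} (h : b ∈ Set.Icc a c) :
    ∫ x in a..c, (Set.Ioi b).indicator f x = ∫ x in b..c, f x := by
  rw [intervalIntegral.integral_of_le (h.1.trans h.2), intervalIntegral.integral_of_le h.2,
    integral_indicator measurableSet_Ioi, Measure.restrict_restrict measurableSet_Ioi,
    Set.inter_comm, Set.Ioc_inter_Ioi, sup_eq_right.2 h.1]

section NatSequences

variable {u v : ℕ → ℕ} {x y : ℝ}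

theorem tendsto_atTop_of_tendsto_div_natCast (hx : 0 < x)
    (hu : Tendsto (fun n : ℕ => (u n : ℝ) / n) atTop (𝓝 x)) : Tendsto u atTop atTop :=
  tendsto_natCast_atTop_iff.1 (tendsto_natCast_atTop_atTop.num hx hu)

theorem eventually_add_le_of_tendsto_div_natCast (hx : x < 1)
    (hu : Tendsto (fun n : ℕ => (u n : ℝ) / n) atTop (𝓝 x)) (j : ℕ) :
    ∀ᶠ n in atTop, u n + j ≤ n := by
  have h : Tendsto (fun n : ℕ => ((u n + j : ℕ) : ℝ) / n) atTop (𝓝 x) := by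
    simpa [add_div] using hu.add (tendsto_const_div_atTop_nhds_zero_nat (j : ℝ))
  filter_upwards [h.eventually (eventually_lt_nhds hx), eventually_gt_atTop 0] with n hlt hn
  rw [div_lt_one (by exact_mod_cast hn)] at hlt
  exact_mod_cast hlt.le

theorem tendsto_natSub_div_natCast (hu : Tendsto (fun n : ℕ => (u n : ℝ) / n) atTop (𝓝 x))
    (hv : Tendsto (fun n : ℕ => (v n : ℝ) / n) atTop (𝓝 y)) (hvu : ∀ᶠ n in atTop, v n ≤ u n) :
    Tendsto (fun n : ℕ => ((u n - v n : ℕ) : ℝ) / n) atTop (𝓝 (x - y)) := by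
  refine (hu.sub hv).congr' ?_
  filter_upwards [hvu] with n h
  rw [Nat.cast_sub h, sub_div]

theorem tendsto_natSub_const_div_natCast
    (hu : Tendsto (fun n : ℕ => (u n : ℝ) / n) atTop (𝓝 x)) {c : ℕ}
    (hc : ∀ᶠ n in atTop, c ≤ u n) :
    Tendsto (fun n : ℕ => ((u n - c : ℕ) : ℝ) / n) atTop (𝓝 x) := by
  simpa using tendsto_natSub_div_natCast (v := fun _ => c) hu
    (tendsto_const_div_atTop_nhds_zero_nat (c : ℝ)) hc

theorem tendsto_natCast_div_self : Tendsto (fun n : ℕ => (n : ℝ) / n) atTop (𝓝 1) :=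
  tendsto_const_nhds.congr' <| (eventually_ne_atTop 0).mono fun _ hn =>
    (div_self (Nat.cast_ne_zero.2 hn)).symm

theorem tendsto_descFactorial_div_pow (hx : 0 < x)
    (hu : Tendsto (fun n : ℕ => (u n : ℝ) / n) atTop (𝓝 x)) (d : ℕ) :
    Tendsto (fun n : ℕ => ((u n).descFactorial d : ℝ) / (n : ℝ) ^ d) atTop (𝓝 (x ^ d)) := by
  have := tendsto_finsetProd (range d) fun t _ => tendsto_natSub_const_div_natCast hu
    ((tendsto_atTop_of_tendsto_div_natCast hx hu).eventually_ge_atTop t)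
  rw [prod_const, card_range] at this
  refine this.congr fun n => ?_
  rw [Nat.descFactorial_eq_prod_range, Nat.cast_prod, prod_div_distrib, prod_const, card_range]

theorem tendsto_descFactorial_div_descFactorial (hx : 0 < x) (hy : 0 < y)
    (hu : Tendsto (fun n : ℕ => (u n : ℝ) / n) atTop (𝓝 x))
    (hv : Tendsto (fun n : ℕ => (v n : ℝ) / n) atTop (𝓝 y)) (d : ℕ) :
    Tendsto (fun n : ℕ => ((u n).descFactorial d : ℝ) / (v n).descFactorial d) atTop
      (𝓝 (x ^ d / y ^ d)) := by
  refine ((tendsto_descFactorial_div_pow hx hu d).div (tendsto_descFactorial_div_pow hy hv d)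
    (pow_ne_zero d hy.ne')).congr' ?_
  filter_upwards [eventually_ne_atTop 0] with n hn
  exact div_div_div_cancel_right₀ (pow_ne_zero d (Nat.cast_ne_zero.2 hn)) _ _

end NatSequences

section Combinatorics

theorem Nat.cast_descFactorial_eq_factorial_div {K : Type*} [Field K] [CharZero K] {a c : ℕ}
    (h : c ≤ a) : (a.descFactorial c : K) = a.factorial / (a - c).factorial := by
  rw [eq_div_iff (Nat.cast_ne_zero.2 (Nat.factorial_ne_zero _)), ← Nat.cast_mul, mul_comm,
    Nat.factorial_mul_descFactorial h]

theorem cast_choose_div_choose_eq_descFactorial {n i j k : ℕ} (hk : 1 ≤ k) (hkj : k ≤ j)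
    (hki : k ≤ i) (hijn : i + j ≤ n + k) :
    ((n - j).choose (i - k) : ℝ) / (n - 1).choose (i - 1)
      = (i - 1).descFactorial (k - 1) * (n - i).descFactorial (j - k)
        / (n - 1).descFactorial (j - 1) := by
  rw [Nat.cast_choose ℝ (by omega : i - k ≤ n - j), Nat.cast_choose ℝ (by omega : i - 1 ≤ n - 1),
    Nat.cast_descFactorial_eq_factorial_div (by omega : k - 1 ≤ i - 1),
    Nat.cast_descFactorial_eq_factorial_div (by omega : j - k ≤ n - i),
    Nat.cast_descFactorial_eq_factorial_div (by omega : j - 1 ≤ n - 1),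
    show n - j - (i - k) = n - i - (j - k) by omega, show i - 1 - (k - 1) = i - k by omega,
    show n - 1 - (i - 1) = n - i by omega, show n - 1 - (j - 1) = n - j by omega]
  field_simp

theorem tendsto_choose_div_choose {j k : ℕ} (hk : 1 ≤ k) (hkj : k ≤ j) {x : ℝ} (hx0 : 0 < x)
    (hx1 : x < 1) {i : ℕ → ℕ} (hi : Tendsto (fun n : ℕ => (i n : ℝ) / n) atTop (𝓝 x)) :
    Tendsto (fun n : ℕ => ((n - j).choose (i n - k) : ℝ) / (n - 1).choose (i n - 1)) atTop
      (𝓝 (x ^ (k - 1) * (1 - x) ^ (j - k))) := by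
  have hki : ∀ᶠ n in atTop, k ≤ i n :=
    (tendsto_atTop_of_tendsto_div_natCast hx0 hi).eventually_ge_atTop k
  have hijn := eventually_add_le_of_tendsto_div_natCast hx1 hi j
  have hi1 := tendsto_natSub_const_div_natCast hi (hki.mono fun n h => hk.trans h)
  have hni := tendsto_natSub_div_natCast (u := id) tendsto_natCast_div_self hi
    (hijn.mono fun n h => by simp only [id]; omega)
  have hn1 := tendsto_natSub_const_div_natCast (u := id) tendsto_natCast_div_self
    (eventually_ge_atTop 1)
  have hlim := ((tendsto_descFactorial_div_pow hx0 hi1 (k - 1)).mul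
    (tendsto_descFactorial_div_pow (sub_pos.2 hx1) hni (j - k))).div
    (tendsto_descFactorial_div_pow one_pos hn1 (j - 1)) (by simp)
  rw [one_pow, div_one] at hlim
  refine hlim.congr' ?_
  filter_upwards [hki, hijn, eventually_ne_atTop 0] with n hkn hjn hn
  have hpow : (n : ℝ) ^ (j - 1) = (n : ℝ) ^ (k - 1) * (n : ℝ) ^ (j - k) := by
    rw [← pow_add]; congr 1; omega
  have hd : ((n - 1).descFactorial (j - 1) : ℝ) ≠ 0 :=
    Nat.cast_ne_zero.2 (Nat.descFactorial_pos.2 (by omega)).ne'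
  have : (n : ℝ) ≠ 0 := Nat.cast_ne_zero.2 hn
  simp only [Pi.div_apply, id]
  rw [cast_choose_div_choose_eq_descFactorial hk hkj hkn (by omega), hpow]
  field_simp

theorem sum_Icc_choose_mul_choose_le (a c : ℕ) {i r : ℕ} (hri : r ≤ i) :
    ∑ k ∈ Icc 1 r, a.choose (k - 1) * c.choose (i - k) ≤ (a + c).choose (i - 1) := by
  rw [Nat.add_choose_eq]
  have hinj : Set.InjOn (fun k => (k - 1, i - k)) (Icc 1 r) := by
    intro k hk l hl h
    simp only [coe_Icc, Set.mem_Icc, Prod.mk.injEq] at hk hl h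
    omega
  rw [← sum_image (f := fun p : ℕ × ℕ => a.choose p.1 * c.choose p.2) hinj]
  refine sum_le_sum_of_subset fun p hp => ?_
  simp only [mem_image, mem_Icc] at hp
  obtain ⟨k, hk, rfl⟩ := hp
  rw [HasAntidiagonal.mem_antidiagonal]
  omega

end Combinatorics

section SingleLevelPolicy

noncomputable def slpChooseSum (n b r i : ℕ) : ℝ :=
  ∑ j ∈ Icc (r + 1) b, ∑ k ∈ Icc 1 r,
    ((Nat.choose (j - 1) (k - 1) * Nat.choose (n - j) (i - k) : ℕ) : ℝ)
      / (Nat.choose (n - 1) (i - 1) : ℝ)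

noncomputable def slpBinomialSum (b r : ℕ) (x : ℝ) : ℝ :=
  ∑ j ∈ Icc (r + 1) b, ∑ k ∈ Icc 1 r,
    (Nat.choose (j - 1) (k - 1) : ℝ) * x ^ (k - 1) * (1 - x) ^ (j - k)

noncomputable def slpTerm (n b s r i : ℕ) : ℝ :=
  (s.descFactorial r : ℝ) / (i - 1).descFactorial r * (r + slpChooseSum n b r i)

/-- `n` times the summand of `Pslp` of index `i = m + 1`, so that `x ↦ slpStep n b s r ⌊n * x⌋₊`
is the step function whose integral over `[0, 1]` is the sum in `Pslp`. -/
noncomputable def slpStep (n b s r m : ℕ) : ℝ :=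
  if m + 1 ∈ Icc (s + 1) (n - 1) then slpTerm n b s r (m + 1) else 0

theorem Pslp_eq (n b s r : ℕ) :
    Pslp n b s r = (∑ m ∈ range n, slpStep n b s r m) / n
      + (s.descFactorial r : ℝ) / (n - 1).descFactorial r * (b / n) := by
  have hsum : ∑ m ∈ range n, slpStep n b s r m = ∑ i ∈ Icc (s + 1) (n - 1), slpTerm n b s r i := by
    simp only [range_eq_Ico, slpStep]
    rw [sum_Ico_add' (fun i => if i ∈ Icc (s + 1) (n - 1) then slpTerm n b s r i else 0),
      sum_ite_mem, inter_eq_right.2]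
    intro i hi
    simp only [mem_Icc, mem_Ico] at hi ⊢
    omega
  rw [hsum, sum_div, Pslp]
  congr 1
  refine sum_congr rfl fun i _ => ?_
  rw [slpTerm, slpChooseSum]
  ring

theorem slpChooseSum_le {n b r i : ℕ} (hri : r ≤ i) (hin : i ≤ n) (hbn : b ≤ n) :
    slpChooseSum n b r i ≤ b := by
  have hpos : (0 : ℝ) < (n - 1).choose (i - 1) := by exact_mod_cast Nat.choose_pos (by omega)
  calc slpChooseSum n b r i ≤ ∑ _j ∈ Icc (r + 1) b, (1 : ℝ) := by
        refine sum_le_sum fun j hj => ?_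
        rw [mem_Icc] at hj
        rw [← sum_div, div_le_one hpos, ← Nat.cast_sum, Nat.cast_le,
          show n - 1 = (j - 1) + (n - j) by omega]
        exact sum_Icc_choose_mul_choose_le _ _ hri
    _ ≤ b := by simp

theorem slpTerm_nonneg (n b s r i : ℕ) : 0 ≤ slpTerm n b s r i := by
  unfold slpTerm slpChooseSum
  positivity

theorem slpTerm_le {n b s r i : ℕ} (hrs : r ≤ s) (hsi : s < i) (hin : i ≤ n) (hbn : b ≤ n) :
    slpTerm n b s r i ≤ r + b := by
  have hratio : (s.descFactorial r : ℝ) / (i - 1).descFactorial r ≤ 1 := by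
    rw [div_le_one (by exact_mod_cast Nat.descFactorial_pos.2 (by omega)), Nat.cast_le]
    exact Nat.descFactorial_le r (by omega)
  have hsum := slpChooseSum_le (hrs.trans hsi.le) hin hbn
  calc slpTerm n b s r i ≤ 1 * (r + slpChooseSum n b r i) :=
        mul_le_mul_of_nonneg_right hratio (by unfold slpChooseSum; positivity)
    _ ≤ r + b := by linarith

theorem abs_slpStep_le {n b s r : ℕ} (hrs : r ≤ s) (hbn : b ≤ n) (m : ℕ) :
    |slpStep n b s r m| ≤ r + b := by
  unfold slpStep
  split_ifs with hm
  · rw [mem_Icc] at hm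
    rw [abs_of_nonneg (slpTerm_nonneg ..)]
    exact slpTerm_le hrs (by omega) (by omega) hbn
  · rw [abs_zero]; positivity

theorem tendsto_slpChooseSum (b r : ℕ) {x : ℝ} (hx0 : 0 < x) (hx1 : x < 1) {i : ℕ → ℕ}
    (hi : Tendsto (fun n : ℕ => (i n : ℝ) / n) atTop (𝓝 x)) :
    Tendsto (fun n : ℕ => slpChooseSum n b r (i n)) atTop (𝓝 (slpBinomialSum b r x)) := by
  refine tendsto_finsetSum _ fun j hj => tendsto_finsetSum _ fun k hk => ?_
  rw [mem_Icc] at hj hk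
  simp only [Nat.cast_mul, mul_div_assoc, mul_assoc]
  exact (tendsto_choose_div_choose hk.1 (by omega) hx0 hx1 hi).const_mul _

variable {α x : ℝ} {s : ℕ → ℕ}

theorem slpStep_eventually_eq_zero (b r : ℕ) (hx0 : 0 ≤ x) (hxα : x < α)
    (hs : Tendsto (fun n : ℕ => (s n : ℝ) / n) atTop (𝓝 α)) :
    ∀ᶠ n in atTop, slpStep n b (s n) r ⌊(n : ℝ) * x⌋₊ = 0 := by
  filter_upwards [hs.eventually (eventually_gt_nhds hxα), eventually_gt_atTop 0] with n hn hn0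
  have hn0' : (0 : ℝ) < n := by exact_mod_cast hn0
  rw [lt_div_iff₀ hn0'] at hn
  have hfloor : ⌊(n : ℝ) * x⌋₊ < s n := by
    rw [Nat.floor_lt (by positivity)]
    linarith
  rw [slpStep, if_neg]
  simp only [mem_Icc, not_and, not_le]
  omega

theorem tendsto_slpStep (b r : ℕ) (hα0 : 0 < α) (hαx : α < x) (hx1 : x < 1)
    (hs : Tendsto (fun n : ℕ => (s n : ℝ) / n) atTop (𝓝 α)) :
    Tendsto (fun n : ℕ => slpStep n b (s n) r ⌊(n : ℝ) * x⌋₊) atTop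
      (𝓝 (α ^ r / x ^ r * (r + slpBinomialSum b r x))) := by
  have hx0 : 0 < x := hα0.trans hαx
  have hfloor : Tendsto (fun n : ℕ => (⌊(n : ℝ) * x⌋₊ : ℝ) / n) atTop (𝓝 x) := by
    simpa [Function.comp_def, mul_comm] using
      (tendsto_nat_floor_mul_div_atTop hx0.le).comp tendsto_natCast_atTop_atTop
  have hsucc : Tendsto (fun n : ℕ => ((⌊(n : ℝ) * x⌋₊ + 1 : ℕ) : ℝ) / n) atTop (𝓝 x) := by
    simpa [add_div] using hfloor.add (tendsto_const_div_atTop_nhds_zero_nat 1)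
  have hlow : ∀ᶠ n in atTop, s n ≤ ⌊(n : ℝ) * x⌋₊ := by
    filter_upwards [hs.eventually (eventually_lt_nhds hαx), eventually_gt_atTop 0] with n hn hn0
    rw [div_lt_iff₀ (by exact_mod_cast hn0)] at hn
    exact Nat.le_floor (by linarith)
  refine ((tendsto_descFactorial_div_descFactorial hα0 hx0 hs hfloor r).mul
    (tendsto_const_nhds.add (tendsto_slpChooseSum b r hx0 hx1 hsucc))).congr' ?_
  filter_upwards [hlow, eventually_add_le_of_tendsto_div_natCast hx1 hfloor 2] with n hlow hup
  rw [slpStep, if_pos (mem_Icc.2 ⟨by omega, by omega⟩), slpTerm, Nat.add_sub_cancel]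

theorem tendsto_slp_tail (b r : ℕ) (hα0 : 0 < α)
    (hs : Tendsto (fun n : ℕ => (s n : ℝ) / n) atTop (𝓝 α)) :
    Tendsto (fun n : ℕ => (s n).descFactorial r / ((n - 1).descFactorial r : ℝ) * (b / n))
      atTop (𝓝 0) := by
  have hpred := tendsto_natSub_const_div_natCast (u := id) tendsto_natCast_div_self
    (eventually_ge_atTop 1)
  simpa using (tendsto_descFactorial_div_descFactorial hα0 one_pos hs hpred r).mul
    (tendsto_const_div_atTop_nhds_zero_nat (b : ℝ))

end SingleLevelPolicy

theorem slp_win_prob_tendsto_general (r b : ℕ)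
    (α : ℝ) (hα0 : 0 < α) (hα1 : α < 1) (s : ℕ → ℕ)
    (hs : Tendsto (fun n : ℕ => (s n : ℝ) / (n : ℝ)) atTop (nhds α)) :
    Tendsto (fun n : ℕ => Pslp n b (s n) r) atTop
      (nhds (α ^ r * ∫ x in α..1, (1 / x ^ r) *
        ((r : ℝ) + ∑ j ∈ Finset.Icc (r + 1) b, ∑ k ∈ Finset.Icc 1 r,
          (Nat.choose (j - 1) (k - 1) : ℝ) * x ^ (k - 1) * (1 - x) ^ (j - k)))) := by
  have hbound : ∀ᶠ n in atTop, ∀ m, |slpStep n b (s n) r m| ≤ r + b := by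
    filter_upwards [(tendsto_atTop_of_tendsto_div_natCast hα0 hs).eventually_ge_atTop r,
      eventually_ge_atTop b] with n hrs hbn
    exact abs_slpStep_le hrs hbn
  have hlim : ∀ᵐ x, x ∈ Set.Ioo (0 : ℝ) 1 →
      Tendsto (fun n : ℕ => slpStep n b (s n) r ⌊(n : ℝ) * x⌋₊) atTop
        (𝓝 ((Set.Ioi α).indicator
          (fun x => α ^ r * (1 / x ^ r * (r + slpBinomialSum b r x))) x)) := by
    filter_upwards [measure_eq_zero_iff_ae_notMem.1 (measure_singleton α)] with x hxα hx
    rcases lt_or_gt_of_ne (Set.mem_singleton_iff.not.1 hxα) with hlt | hgt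
    · rw [Set.indicator_of_notMem (Set.notMem_Ioi.2 hlt.le)]
      exact tendsto_const_nhds.congr'
        (EventuallyEq.symm (slpStep_eventually_eq_zero b r hx.1.le hlt hs))
    · rw [Set.indicator_of_mem (Set.mem_Ioi.2 hgt), ← mul_assoc, mul_one_div]
      exact tendsto_slpStep b r hα0 hgt hx.2 hs
  have hriemann := tendsto_sum_range_div_of_tendsto_comp_natFloor hbound hlim
  rw [integral_indicator_Ioi ⟨hα0.le, hα1.le⟩, intervalIntegral.integral_const_mul] at hriemann
  simpa only [Pslp_eq, add_zero, slpBinomialSum] using hriemann.add (tendsto_slp_tail b r hα0 hs)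

/-- Fix `1 ≤ r ≤ b` and let `s(n) = αn + o(n)` with `α ∈ (0,1)` (and `r ≤ s(n) ≤ n-2`
eventually). Then the single-level winning probability converges to
`α^r · ∫_α^1 x^{-r}( r + Σ_{j=r+1}^{b} Σ_{k=1}^{r} C(j-1,k-1)x^{k-1}(1-x)^{j-k} )dx`. -/
theorem slp_win_prob_tendsto (r b : ℕ) (hr1 : 1 ≤ r) (hrb : r ≤ b)
    (α : ℝ) (hα0 : 0 < α) (hα1 : α < 1) (s : ℕ → ℕ)
    (hs : Tendsto (fun n : ℕ => (s n : ℝ) / (n : ℝ)) atTop (nhds α))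
    (hsr : ∀ᶠ n in atTop, r ≤ s n ∧ s n ≤ n - 2) :
    Tendsto (fun n : ℕ => Pslp n b (s n) r) atTop
      (nhds (α ^ r * ∫ x in α..1, (1 / x ^ r) *
        ((r : ℝ) + ∑ j ∈ Finset.Icc (r + 1) b, ∑ k ∈ Finset.Icc 1 r,
          (Nat.choose (j - 1) (k - 1) : ℝ) * x ^ (k - 1) * (1 - x) ^ (j - k)))) :=
  slp_win_prob_tendsto_general r b α hα0 hα1 s hs
end
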